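/- arXiv:2301.04859 — 6 statements merged into one kernel-verified Lean document; each statement's English description precedes it below -/
import Mathlib

section
/- Let F be a field, δ ∈ F, and define Δ_k ∈ F by Δ_0 = 1, Δ_1 = δ, Δ_{k+1} = δ·Δ_k - Δ_{k-1}; assume Δ_k ≠ 0 for 1 ≤ k ≤ n-1. Let B be an associative unital F-algebra containing elements e_1, …, e_{n-1} satisfying the Temperley–Lieb relations: e_i^2 = δ·e_i, e_i e_j e_i = e_i for |i-j| = 1, and e_i e_j = e_j e_i for |i-j| > 1. Define the Jones–Wenzl elements f_k ∈ B for 1 ≤ k ≤ n by Wenzl's recursion f_1 = 1 and f_{k+1} = f_k - (Δ_{k-1}/Δ_k)·f_k·e_k·f_k. Then f_n is idempotent: f_n · f_n = f_n. -/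
/-- The Jones–Wenzl element defined by Wenzl's recursion in a Temperley–Lieb
algebra is idempotent: `f n * f n = f n`. -/
theorem jones_wenzl_idempotent {F : Type*} [Field F] {B : Type*} [Ring B] [Algebra F B]
    (n : ℕ) (δ : F) (Δ : ℕ → F)
    (hΔ0 : Δ 0 = 1) (hΔ1 : Δ 1 = δ)
    (hΔrec : ∀ k, Δ (k + 2) = δ * Δ (k + 1) - Δ k)
    (hΔne : ∀ k, 1 ≤ k → k ≤ n - 1 → Δ k ≠ 0)
    (e : ℕ → B)
    (he1 : ∀ i, 1 ≤ i → i ≤ n - 1 → e i ^ 2 = δ • e i)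
    (he2 : ∀ i j, 1 ≤ i → i ≤ n - 1 → 1 ≤ j → j ≤ n - 1 →
      |(i : ℤ) - (j : ℤ)| = 1 → e i * e j * e i = e i)
    (he3 : ∀ i j, 1 ≤ i → i ≤ n - 1 → 1 ≤ j → j ≤ n - 1 →
      1 < |(i : ℤ) - (j : ℤ)| → e i * e j = e j * e i)
    (f : ℕ → B) (hf1 : f 1 = 1)
    (hfrec : ∀ k, 1 ≤ k → k ≤ n - 1 →
      f (k + 1) = f k - (Δ (k - 1) / Δ k) • (f k * e k * f k))
    (hn : 1 ≤ n) :
    f n * f n = f n := by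
  have key : ∀ k, k ≤ n → 1 ≤ k →
      (f k * f k = f k) ∧
      (∀ j, k + 1 ≤ j → j ≤ n - 1 → e j * f k = f k * e j) ∧
      (k ≤ n - 1 → f k * e k * f k * e k * f k
        = (Δ k / Δ (k - 1)) • (f k * e k * f k)) := by
    intro k
    induction k with
    | zero => omega
    | succ m ih =>
      intro hkn _
      rcases Nat.eq_zero_or_pos m with hm0 | hm1
      · -- base case k = 1
        subst hm0
        refine ⟨by simp [hf1], fun j _ _ => by simp [hf1], fun h1n => ?_⟩
        have h := he1 1 le_rfl h1n
        rw [sq] at h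
        simp [hf1, hΔ0, hΔ1, h]
      · -- inductive step, m ≥ 1
        have hmn : m ≤ n := by omega
        have hmn1 : m ≤ n - 1 := by omega
        obtain ⟨ha, hb, hc⟩ := ih hmn hm1
        have hcm := hc hmn1
        set a := f m with ha_def
        set u := e m with hu_def
        set c := Δ (m - 1) / Δ m with hc_def
        have hrec : f (m + 1) = a - c • (a * u * a) := hfrec m hm1 hmn1
        have hΔm : Δ m ≠ 0 := hΔne m hm1 hmn1
        set X := a * u * a with hX_def
        have haX : a * X = X := by
          rw [hX_def, show a * (a * u * a) = (a * a) * u * a by noncomm_ring, ha]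
        have hXa : X * a = X := by rw [hX_def, mul_assoc, ha]
        have hXX : X * X = (Δ m / Δ (m - 1)) • X := by
          rw [hX_def, show (a * u * a) * (a * u * a) = a * u * (a * a) * u * a by
            noncomm_ring, ha]
          exact hcm
        have hscal : c * (c * (Δ m / Δ (m - 1))) = c := by
          rcases eq_or_ne (Δ (m - 1)) 0 with h0 | h0
          · simp [hc_def, h0]
          · rw [hc_def]; field_simp
        have hidem : f (m + 1) * f (m + 1) = f (m + 1) := by
          rw [hrec]
          simp only [sub_mul, mul_sub, smul_mul_assoc, mul_smul_comm, smul_smul, smul_sub,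
            ha, haX, hXa, hXX, hscal]
          abel
        have habs : f (m + 1) * a = f (m + 1) := by
          rw [hrec, sub_mul, ha, smul_mul_assoc, hXa]
        refine ⟨hidem, ?_, ?_⟩
        · -- commutation
          intro j hj hj2
          have hje : e j * u = u * e j := by
            have habs : (1 : ℤ) < |(j : ℤ) - (m : ℤ)| := by
              have : (m : ℤ) + 2 ≤ (j : ℤ) := by exact_mod_cast hj
              rw [abs_of_nonneg (by omega)]; omega
            exact (he3 j m (by omega) hj2 hm1 hmn1 habs)
          have hja : e j * a = a * e j := hb j (by omega) hj2
          have h1 : e j * X = X * e j := by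
            rw [hX_def]
            calc e j * (a * u * a) = (e j * a) * u * a := by noncomm_ring
              _ = (a * e j) * u * a := by rw [hja]
              _ = a * (e j * u) * a := by rw [mul_assoc a]
              _ = a * (u * e j) * a := by rw [hje]
              _ = a * u * (e j * a) := by noncomm_ring
              _ = a * u * (a * e j) := by rw [hja]
              _ = a * u * a * e j := by noncomm_ring
          rw [hrec, mul_sub, sub_mul, hja, mul_smul_comm, smul_mul_assoc, h1]
        · -- the key identity at m + 1
          intro hbound
          set v := e (m + 1) with hv_def
          have hva : v * a = a * v := hb (m + 1) le_rfl hbound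
          have hvv : v * v = δ • v := by
            have h := he1 (m + 1) (by omega) hbound
            rwa [sq] at h
          have hvuv : v * u * v = v := by
            refine he2 (m + 1) m (by omega) hbound hm1 hmn1 ?_
            have : ((m + 1 : ℕ) : ℤ) - (m : ℤ) = 1 := by push_cast; ring
            rw [this]; norm_num
          have hΔstep : δ - c = Δ (m + 1) / Δ m := by
            have h := hΔrec (m - 1)
            rw [show m - 1 + 2 = m + 1 by omega, show m - 1 + 1 = m by omega] at h
            rw [hc_def]
            field_simp
            linear_combination -h
          have hvXv : v * X * v = a * v := by
            rw [hX_def]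
            calc v * (a * u * a) * v = (v * a) * u * (a * v) := by noncomm_ring
              _ = (a * v) * u * (v * a) := by rw [hva, ← hva]
              _ = a * (v * u * v) * a := by noncomm_ring
              _ = a * (v * a) := by rw [hvuv, mul_assoc]
              _ = a * (a * v) := by rw [hva]
              _ = (a * a) * v := by noncomm_ring
              _ = a * v := by rw [ha]
          have hE : v * f (m + 1) * v = (Δ (m + 1) / Δ m) • (a * v) := by
            calc v * f (m + 1) * v = v * (a - c • X) * v := by rw [hrec]
              _ = (v * a) * v - c • (v * X * v) := by
                  rw [mul_sub, sub_mul, mul_smul_comm, smul_mul_assoc]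
              _ = δ • (a * v) - c • (a * v) := by
                  rw [hvXv, hva, mul_assoc, hvv, mul_smul_comm]
              _ = (δ - c) • (a * v) := by rw [sub_smul]
              _ = (Δ (m + 1) / Δ m) • (a * v) := by rw [hΔstep]
          have hVa : v * a = a * v := hva
          calc f (m + 1) * v * f (m + 1) * v * f (m + 1)
              = f (m + 1) * (v * f (m + 1) * v) * f (m + 1) := by noncomm_ring
            _ = f (m + 1) * ((Δ (m + 1) / Δ m) • (a * v)) * f (m + 1) := by rw [hE]
            _ = (Δ (m + 1) / Δ m) • (f (m + 1) * (a * v) * f (m + 1)) := by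
                rw [mul_smul_comm, smul_mul_assoc]
            _ = (Δ (m + 1) / Δ m) • (f (m + 1) * a * v * f (m + 1)) := by
                rw [← mul_assoc (f (m + 1)) a v]
            _ = (Δ (m + 1) / Δ m) • (f (m + 1) * v * f (m + 1)) := by rw [habs]
            _ = (Δ (m + 1) / Δ (m + 1 - 1)) • (f (m + 1) * v * f (m + 1)) := by
                rw [Nat.add_sub_cancel]
  exact (key n le_rfl hn).1
end

section
/- Let F be a field, δ ∈ F, and define Δ_k ∈ F by Δ_0 = 1, Δ_1 = δ, Δ_{k+1} = δ·Δ_k - Δ_{k-1}; assume Δ_k ≠ 0 for 1 ≤ k ≤ n-1. Let B be an associative unital F-algebra containing elements e_1, …, e_{n-1} satisfying the Temperley–Lieb relations: e_i^2 = δ·e_i, e_i e_j e_i = e_i for |i-j| = 1, and e_i e_j = e_j e_i for |i-j| > 1. Define the Jones–Wenzl elements f_k ∈ B by Wenzl's recursion f_1 = 1 and f_{k+1} = f_k - (Δ_{k-1}/Δ_k)·f_k·e_k·f_k. Then for every i with 1 ≤ i ≤ n-1, e_i · f_n = 0 and f_n · e_i = 0. -/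
/-!
By induction on `m`, `f m` is an idempotent that kills `e 1, …, e (m - 1)` on both sides,
commutes with `e j` for `j > m`, and satisfies
`e m * f m * e m * f m = (Δ m / Δ (m - 1)) • (e m * f m)` (and its mirror image).
The last identity is exactly what makes the correction term of Wenzl's recursion cancel `e m`
in `f (m + 1)`. It propagates because `e (m + 1)` commutes with `f m`, so that the relations
`e (m + 1) ^ 2 = δ • e (m + 1)` and `e (m + 1) * e m * e (m + 1) = e (m + 1)` give
`e (m + 1) * f (m + 1) * e (m + 1) = (δ - Δ (m - 1) / Δ m) • (f m * e (m + 1))`,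
and `δ - Δ (m - 1) / Δ m = Δ (m + 1) / Δ m`.
-/

section WenzlStep

variable {R B : Type*} [CommRing R] [Ring B] [Algebra R B]

/-- Wenzl's recursion reads `f (k + 1) = wenzlStep (Δ (k - 1) / Δ k) (f k) (e k)`. -/
def wenzlStep (c : R) (p x : B) : B := p - c • (p * x * p)

variable {c r δ : R} {p x y z : B}

theorem mul_wenzlStep_eq_zero (hcr : c * r = 1) (h : x * p * x * p = r • (x * p)) :
    x * wenzlStep c p x = 0 := by
  rw [wenzlStep, mul_sub, mul_smul_comm, ← mul_assoc, ← mul_assoc, h, smul_smul, hcr, one_smul,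
    sub_self]

theorem wenzlStep_mul_eq_zero (hcr : c * r = 1) (h : p * x * p * x = r • (p * x)) :
    wenzlStep c p x * x = 0 := by
  rw [wenzlStep, sub_mul, smul_mul_assoc, h, smul_smul, hcr, one_smul, sub_self]

theorem mul_wenzlStep_eq_zero_of_mul_eq_zero (h : y * p = 0) : y * wenzlStep c p x = 0 := by
  simp [wenzlStep, mul_sub, ← mul_assoc, h]

theorem wenzlStep_mul_eq_zero_of_mul_eq_zero (h : p * y = 0) : wenzlStep c p x * y = 0 := by
  simp [wenzlStep, sub_mul, mul_assoc, h]

theorem Commute.wenzlStep_right (hp : Commute y p) (hx : Commute y x) :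
    Commute y (wenzlStep c p x) :=
  hp.sub_right (((hp.mul_right hx).mul_right hp).smul_right c)

namespace IsIdempotentElem

theorem mul_wenzlStep (hp : IsIdempotentElem p) : p * wenzlStep c p x = wenzlStep c p x := by
  rw [wenzlStep, mul_sub, mul_smul_comm, ← mul_assoc, ← mul_assoc, hp.eq]

theorem wenzlStep_mul (hp : IsIdempotentElem p) : wenzlStep c p x * p = wenzlStep c p x := by
  rw [wenzlStep, sub_mul, smul_mul_assoc, mul_assoc (p * x), hp.eq]

theorem mul_wenzlStep_mul (hp : IsIdempotentElem p) (hzp : Commute z p) (hzz : z * z = δ • z)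
    (hzxz : z * x * z = z) : z * wenzlStep c p x * z = (δ - c) • (p * z) := by
  have hzpz : z * p * z = δ • (p * z) := by rw [hzp.eq, mul_assoc, hzz, mul_smul_comm]
  have hzpxpz : z * (p * x * p) * z = p * z :=
    calc z * (p * x * p) * z = z * p * x * (p * z) := by noncomm_ring
      _ = p * z * x * (z * p) := by rw [hzp.eq]
      _ = p * (z * x * z) * p := by noncomm_ring
      _ = p * z := by rw [hzxz, mul_assoc, hzp.eq, ← mul_assoc, hp.eq]
  rw [wenzlStep, mul_sub, sub_mul, mul_smul_comm, smul_mul_assoc, hzpz, hzpxpz, sub_smul]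

theorem mul_wenzlStep_mul_mul_wenzlStep (hp : IsIdempotentElem p) (hzp : Commute z p)
    (hzz : z * z = δ • z) (hzxz : z * x * z = z) :
    z * wenzlStep c p x * z * wenzlStep c p x = (δ - c) • (z * wenzlStep c p x) := by
  rw [hp.mul_wenzlStep_mul hzp hzz hzxz, smul_mul_assoc, ← hzp.eq, mul_assoc, hp.mul_wenzlStep]

theorem wenzlStep_mul_mul_wenzlStep_mul (hp : IsIdempotentElem p) (hzp : Commute z p)
    (hzz : z * z = δ • z) (hzxz : z * x * z = z) :
    wenzlStep c p x * z * wenzlStep c p x * z = (δ - c) • (wenzlStep c p x * z) := by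
  calc wenzlStep c p x * z * wenzlStep c p x * z = wenzlStep c p x * (z * wenzlStep c p x * z) := by
        simp only [mul_assoc]
    _ = (δ - c) • (wenzlStep c p x * z) := by
        rw [hp.mul_wenzlStep_mul hzp hzz hzxz, mul_smul_comm, ← mul_assoc, hp.wenzlStep_mul]

end IsIdempotentElem

theorem isIdempotentElem_wenzlStep (hp : IsIdempotentElem p) (hx : x * wenzlStep c p x = 0) :
    IsIdempotentElem (wenzlStep c p x) := by
  unfold IsIdempotentElem
  nth_rw 1 [wenzlStep]
  rw [sub_mul, smul_mul_assoc, mul_assoc, mul_assoc, hp.mul_wenzlStep, hx, mul_zero, smul_zero,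
    sub_zero]

end WenzlStep

section JonesWenzl

variable {F B : Type*} [Field F] [Ring B] [Algebra F B]

structure JonesWenzlInvariant (n : ℕ) (Δ : ℕ → F) (e f : ℕ → B) (m : ℕ) : Prop where
  gen_mul_eq_zero : ∀ j, 1 ≤ j → j < m → e j * f m = 0
  mul_gen_eq_zero : ∀ j, 1 ≤ j → j < m → f m * e j = 0
  isIdempotentElem : IsIdempotentElem (f m)
  commute : ∀ j, m < j → j < n → Commute (e j) (f m)
  gen_mul_gen_mul : m < n → e m * f m * e m * f m = (Δ m / Δ (m - 1)) • (e m * f m)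
  mul_gen_mul_gen : m < n → f m * e m * f m * e m = (Δ m / Δ (m - 1)) • (f m * e m)

variable {n : ℕ} {δ : F} {Δ : ℕ → F} {e f : ℕ → B}

theorem jonesWenzlInvariant_one (hΔ0 : Δ 0 = 1) (hΔ1 : Δ 1 = δ) (hf1 : f 1 = 1)
    (hsq : 1 < n → e 1 * e 1 = δ • e 1) : JonesWenzlInvariant n Δ e f 1 where
  gen_mul_eq_zero _ hj hj' := absurd hj' (by omega)
  mul_gen_eq_zero _ hj hj' := absurd hj' (by omega)
  isIdempotentElem := hf1 ▸ IsIdempotentElem.one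
  commute _ _ _ := hf1 ▸ Commute.one_right _
  gen_mul_gen_mul h := by simp [hf1, hΔ0, hΔ1, hsq h]
  mul_gen_mul_gen h := by simp [hf1, hΔ0, hΔ1, hsq h]

theorem JonesWenzlInvariant.succ {k : ℕ} (h : JonesWenzlInvariant n Δ e f k) (hkn : k < n)
    (hΔk : Δ k ≠ 0) (hΔk' : Δ (k - 1) ≠ 0)
    (hf : f (k + 1) = wenzlStep (Δ (k - 1) / Δ k) (f k) (e k))
    (hcomm : ∀ j, k + 1 < j → j < n → Commute (e j) (e k))
    (hsq : k + 1 < n → e (k + 1) * e (k + 1) = δ • e (k + 1))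
    (hbraid : k + 1 < n → e (k + 1) * e k * e (k + 1) = e (k + 1))
    (hΔ : Δ (k + 1) = δ * Δ k - Δ (k - 1)) :
    JonesWenzlInvariant n Δ e f (k + 1) := by
  have hcr : Δ (k - 1) / Δ k * (Δ k / Δ (k - 1)) = 1 := by
    rw [div_mul_div_cancel₀ hΔk, div_self hΔk']
  have hδ : δ - Δ (k - 1) / Δ k = Δ (k + 1) / Δ (k + 1 - 1) := by
    rw [add_tsub_cancel_right, hΔ]
    field_simp
  refine ⟨fun j hj hjk => ?_, fun j hj hjk => ?_, ?_, fun j hj hjn => ?_, fun hk => ?_,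
    fun hk => ?_⟩ <;> rw [hf]
  · rcases Nat.lt_succ_iff_lt_or_eq.mp hjk with hjk | rfl
    · exact mul_wenzlStep_eq_zero_of_mul_eq_zero (h.gen_mul_eq_zero j hj hjk)
    · exact mul_wenzlStep_eq_zero hcr (h.gen_mul_gen_mul hkn)
  · rcases Nat.lt_succ_iff_lt_or_eq.mp hjk with hjk | rfl
    · exact wenzlStep_mul_eq_zero_of_mul_eq_zero (h.mul_gen_eq_zero j hj hjk)
    · exact wenzlStep_mul_eq_zero hcr (h.mul_gen_mul_gen hkn)
  · exact isIdempotentElem_wenzlStep h.isIdempotentElem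
      (mul_wenzlStep_eq_zero hcr (h.gen_mul_gen_mul hkn))
  · exact (h.commute j (by omega) hjn).wenzlStep_right (hcomm j hj hjn)
  · rw [← hδ]
    exact h.isIdempotentElem.mul_wenzlStep_mul_mul_wenzlStep (h.commute (k + 1) k.lt_succ_self hk)
      (hsq hk) (hbraid hk)
  · rw [← hδ]
    exact h.isIdempotentElem.wenzlStep_mul_mul_wenzlStep_mul (h.commute (k + 1) k.lt_succ_self hk)
      (hsq hk) (hbraid hk)

theorem jonesWenzlInvariant_of_le (hΔ0 : Δ 0 = 1) (hΔ1 : Δ 1 = δ)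
    (hΔrec : ∀ k, Δ (k + 2) = δ * Δ (k + 1) - Δ k) (hΔne : ∀ k, 1 ≤ k → k < n → Δ k ≠ 0)
    (hsq : ∀ i, 1 ≤ i → i < n → e i * e i = δ • e i)
    (hbraid : ∀ i, 1 ≤ i → i + 1 < n → e (i + 1) * e i * e (i + 1) = e (i + 1))
    (hcomm : ∀ i j, 1 ≤ i → i + 1 < j → j < n → Commute (e j) (e i)) (hf1 : f 1 = 1)
    (hfrec : ∀ k, 1 ≤ k → k < n → f (k + 1) = wenzlStep (Δ (k - 1) / Δ k) (f k) (e k))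
    {m : ℕ} (hm : 1 ≤ m) (hmn : m ≤ n) : JonesWenzlInvariant n Δ e f m := by
  induction m, hm using Nat.le_induction with
  | base => exact jonesWenzlInvariant_one hΔ0 hΔ1 hf1 (hsq 1 le_rfl)
  | succ k hk ih =>
    obtain ⟨k, rfl⟩ := Nat.exists_eq_add_of_le' hk
    have hkn : k + 1 < n := by omega
    have hΔk : Δ k ≠ 0 := by
      rcases k.eq_zero_or_pos with rfl | hk
      · simp [hΔ0]
      · exact hΔne k hk (by omega)
    refine (ih hkn.le).succ hkn (hΔne _ hk hkn) hΔk (hfrec _ hk hkn)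
      (fun j hj hjn => hcomm _ j hk hj hjn) (hsq _ (by omega)) (hbraid _ hk) (hΔrec k)

end JonesWenzl

/-- The Jones–Wenzl element `f n` annihilates each Temperley–Lieb generator:
`e i * f n = 0` and `f n * e i = 0` for `1 ≤ i ≤ n - 1`. -/
theorem jones_wenzl_annihilates_generators {F : Type*} [Field F] {B : Type*} [Ring B]
    [Algebra F B]
    (n : ℕ) (δ : F) (Δ : ℕ → F)
    (hΔ0 : Δ 0 = 1) (hΔ1 : Δ 1 = δ)
    (hΔrec : ∀ k, Δ (k + 2) = δ * Δ (k + 1) - Δ k)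
    (hΔne : ∀ k, 1 ≤ k → k ≤ n - 1 → Δ k ≠ 0)
    (e : ℕ → B)
    (he1 : ∀ i, 1 ≤ i → i ≤ n - 1 → e i ^ 2 = δ • e i)
    (he2 : ∀ i j, 1 ≤ i → i ≤ n - 1 → 1 ≤ j → j ≤ n - 1 →
      |(i : ℤ) - (j : ℤ)| = 1 → e i * e j * e i = e i)
    (he3 : ∀ i j, 1 ≤ i → i ≤ n - 1 → 1 ≤ j → j ≤ n - 1 →
      1 < |(i : ℤ) - (j : ℤ)| → e i * e j = e j * e i)
    (f : ℕ → B) (hf1 : f 1 = 1)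
    (hfrec : ∀ k, 1 ≤ k → k ≤ n - 1 →
      f (k + 1) = f k - (Δ (k - 1) / Δ k) • (f k * e k * f k)) :
    ∀ i, 1 ≤ i → i ≤ n - 1 → e i * f n = 0 ∧ f n * e i = 0 := by
  intro i hi hin
  have hinv : JonesWenzlInvariant n Δ e f n :=
    jonesWenzlInvariant_of_le hΔ0 hΔ1 hΔrec (fun k hk hkn => hΔne k hk (by omega))
      (fun i hi hin => by rw [← sq]; exact he1 i hi (by omega))
      (fun i hi hin => he2 (i + 1) i (by omega) (by omega) hi (by omega) (by push_cast; simp))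
      (fun i j hi hij hjn => he3 j i (by omega) (by omega) hi (by omega) (by rw [lt_abs]; omega))
      hf1 (fun k hk hkn => hfrec k hk (by omega)) (by omega) le_rfl
  exact ⟨hinv.gen_mul_eq_zero i hi (by omega), hinv.mul_gen_eq_zero i hi (by omega)⟩
end

section
/- Let F be a field, δ ∈ F, and define Δ_k ∈ F by Δ_0 = 1, Δ_1 = δ, Δ_{k+1} = δ·Δ_k - Δ_{k-1}; assume Δ_k ≠ 0 for 1 ≤ k ≤ n-1. Let B be an associative unital F-algebra containing elements e_1, …, e_n satisfying the Temperley–Lieb relations: e_i^2 = δ·e_i, e_i e_j e_i = e_i for |i-j| = 1, and e_i e_j = e_j e_i for |i-j| > 1. Define the Jones–Wenzl elements f_k ∈ B by Wenzl's recursion f_1 = 1 and f_{k+1} = f_k - (Δ_{k-1}/Δ_k)·f_k·e_k·f_k (so f_k is built from e_1, …, e_{k-1}). Then e_n · f_n · e_n = (Δ_n / Δ_{n-1}) · f_{n-1} · e_n. (This is the algebraic form of the partial trace identity tr_1(f_n) = (Δ_n/Δ_{n-1}) f_{n-1}.) -/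
/-- Algebraic form of the partial trace identity
`tr_1(f_n) = (Δ_n / Δ_{n-1}) f_{n-1}`: namely `e n * f n * e n = (Δ n / Δ (n-1)) • (f (n-1) * e n)`. -/
theorem jones_wenzl_partial_trace {F : Type*} [Field F] {B : Type*} [Ring B] [Algebra F B]
    (n : ℕ) (δ : F) (Δ : ℕ → F)
    (hΔ0 : Δ 0 = 1) (hΔ1 : Δ 1 = δ)
    (hΔrec : ∀ k, Δ (k + 2) = δ * Δ (k + 1) - Δ k)
    (hΔne : ∀ k, 1 ≤ k → k ≤ n - 1 → Δ k ≠ 0)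
    (e : ℕ → B)
    (he1 : ∀ i, 1 ≤ i → i ≤ n → e i ^ 2 = δ • e i)
    (he2 : ∀ i j, 1 ≤ i → i ≤ n → 1 ≤ j → j ≤ n →
      |(i : ℤ) - (j : ℤ)| = 1 → e i * e j * e i = e i)
    (he3 : ∀ i j, 1 ≤ i → i ≤ n → 1 ≤ j → j ≤ n →
      1 < |(i : ℤ) - (j : ℤ)| → e i * e j = e j * e i)
    (f : ℕ → B) (hf0 : f 0 = 1) (hf1 : f 1 = 1)
    (hfrec : ∀ k, 1 ≤ k → k ≤ n - 1 →
      f (k + 1) = f k - (Δ (k - 1) / Δ k) • (f k * e k * f k))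
    (hn : 1 ≤ n) :
    e n * f n * e n = (Δ n / Δ (n - 1)) • (f (n - 1) * e n) := by
  -- f k commutes with e m whenever k + 1 ≤ m ≤ n
  have comm : ∀ k, ∀ m, k + 1 ≤ m → m ≤ n → e m * f k = f k * e m := by
    intro k
    induction k with
    | zero => intro m _ _; simp [hf0]
    | succ k ih =>
      intro m hm1 hm2
      rcases Nat.eq_zero_or_pos k with hk0 | hk
      · subst hk0; simp [hf1]
      · have h1 : e m * f k = f k * e m := ih m (by omega) hm2
        have habs : 1 < |(m : ℤ) - (k : ℤ)| := by
          rw [abs_of_nonneg (show (0:ℤ) ≤ (m : ℤ) - (k : ℤ) by omega)]; omega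
        have h2 : e m * e k = e k * e m := he3 m k (by omega) hm2 hk (by omega) habs
        have h3 : e m * (f k * e k * f k) = (f k * e k * f k) * e m := by
          calc e m * (f k * e k * f k) = (e m * f k) * (e k * f k) := by noncomm_ring
            _ = (f k * e m) * (e k * f k) := by rw [h1]
            _ = f k * (e m * e k) * f k := by noncomm_ring
            _ = f k * (e k * e m) * f k := by rw [h2]
            _ = (f k * e k) * (e m * f k) := by noncomm_ring
            _ = (f k * e k) * (f k * e m) := by rw [h1]
            _ = (f k * e k * f k) * e m := by noncomm_ring
        rw [hfrec k hk (by omega)]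
        simp only [mul_sub, sub_mul, mul_smul_comm, smul_mul_assoc]
        rw [h1, h3]
  -- joint induction: trace identity, idempotency, absorption
  have key : ∀ k, 1 ≤ k →
      (k ≤ n → e k * f k * e k = (Δ k / Δ (k - 1)) • (f (k - 1) * e k)) ∧
      (k ≤ n - 1 → f k * f k = f k ∧ f k * f (k - 1) = f k) := by
    intro k
    induction k with
    | zero => intro h; omega
    | succ k ih =>
      intro _
      rcases Nat.eq_zero_or_pos k with hk0 | hk1
      · subst hk0
        refine ⟨fun h1n => ?_, fun _ => by simp [hf1, hf0]⟩
        have hsq : e 1 * e 1 = δ • e 1 := by rw [← pow_two]; exact he1 1 le_rfl h1n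
        simp only [Nat.add_sub_cancel, hf1, hf0, hΔ0, hΔ1, div_one, one_mul, mul_one]
        exact hsq
      · obtain ⟨Qk, Pk⟩ := ih hk1
        constructor
        · -- trace identity at k+1
          intro hkn
          have hfr := hfrec k hk1 (by omega)
          have hPk := (Pk (by omega)).1
          have hnek : Δ k ≠ 0 := hΔne k hk1 (by omega)
          have hc' : e (k+1) * f k = f k * e (k+1) := comm k (k+1) le_rfl hkn
          have habs1 : |((k+1 : ℕ) : ℤ) - (k : ℤ)| = 1 := by
            rw [abs_of_nonneg (show (0:ℤ) ≤ ((k+1 : ℕ) : ℤ) - (k : ℤ) by omega)]; omega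
          have hE : e (k+1) * e k * e (k+1) = e (k+1) :=
            he2 (k+1) k (by omega) hkn hk1 (by omega) habs1
          have hsq : e (k+1) * e (k+1) = δ • e (k+1) := by
            rw [← pow_two]; exact he1 (k+1) (by omega) hkn
          have B : e k * (f k * e (k+1)) = e k * e (k+1) * f k := by
            rw [← hc', ← mul_assoc]
          have A1 : e (k+1) * f k * e (k+1) = δ • (f k * e (k+1)) := by
            calc e (k+1) * f k * e (k+1) = f k * e (k+1) * e (k+1) := by rw [hc']
              _ = f k * (e (k+1) * e (k+1)) := by rw [mul_assoc]
              _ = f k * (δ • e (k+1)) := by rw [hsq]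
              _ = δ • (f k * e (k+1)) := by rw [mul_smul_comm]
          have A2 : e (k+1) * (f k * e k * f k) * e (k+1) = f k * e (k+1) := by
            calc e (k+1) * (f k * e k * f k) * e (k+1)
                = (e (k+1) * f k) * (e k * (f k * e (k+1))) := by noncomm_ring
              _ = (e (k+1) * f k) * (e k * e (k+1) * f k) := by rw [B]
              _ = (f k * e (k+1)) * (e k * e (k+1) * f k) := by rw [hc']
              _ = f k * (e (k+1) * e k * e (k+1)) * f k := by noncomm_ring
              _ = f k * e (k+1) * f k := by rw [hE]
              _ = f k * (e (k+1) * f k) := by rw [mul_assoc]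
              _ = f k * (f k * e (k+1)) := by rw [hc']
              _ = (f k * f k) * e (k+1) := by rw [← mul_assoc]
              _ = f k * e (k+1) := by rw [hPk]
          have hrec' : Δ (k+1) = δ * Δ k - Δ (k-1) := by
            have h := hΔrec (k-1)
            have e1 : k - 1 + 2 = k + 1 := by omega
            have e2 : k - 1 + 1 = k := by omega
            rw [e1, e2] at h
            exact h
          simp only [Nat.add_sub_cancel]
          rw [hfr]
          simp only [mul_sub, sub_mul, mul_smul_comm, smul_mul_assoc]
          rw [A1, A2, ← sub_smul]
          congr 1
          field_simp
          linear_combination -hrec'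
        · -- idempotency and absorption at k+1
          intro hkn1
          have hfr := hfrec k hk1 (by omega)
          have hPk := (Pk (by omega)).1
          have hRk := (Pk (by omega)).2
          have hQk := Qk (by omega)
          have hnek : Δ k ≠ 0 := hΔne k hk1 (by omega)
          have hne1 : Δ (k - 1) ≠ 0 := by
            rcases Nat.eq_or_lt_of_le hk1 with h | h
            · rw [show k - 1 = 0 by omega, hΔ0]; exact one_ne_zero
            · exact hΔne (k-1) (by omega) (by omega)
          have hA1 : f k * (f k * e k * f k) = f k * e k * f k := by
            calc f k * (f k * e k * f k) = (f k * f k) * (e k * f k) := by noncomm_ring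
              _ = f k * (e k * f k) := by rw [hPk]
              _ = f k * e k * f k := by rw [← mul_assoc]
          have hA2 : (f k * e k * f k) * f k = f k * e k * f k := by
            calc (f k * e k * f k) * f k = (f k * e k) * (f k * f k) := by noncomm_ring
              _ = (f k * e k) * f k := by rw [hPk]
          have hA3 : (f k * e k * f k) * (f k * e k * f k)
              = (Δ k / Δ (k-1)) • (f k * e k * f k) := by
            calc (f k * e k * f k) * (f k * e k * f k)
                = (f k * e k) * (f k * f k) * (e k * f k) := by noncomm_ring
              _ = (f k * e k) * f k * (e k * f k) := by rw [hPk]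
              _ = f k * (e k * f k * e k) * f k := by noncomm_ring
              _ = f k * ((Δ k / Δ (k-1)) • (f (k-1) * e k)) * f k := by rw [hQk]
              _ = (Δ k / Δ (k-1)) • ((f k * f (k-1)) * (e k * f k)) := by
                    simp only [mul_smul_comm, smul_mul_assoc]
                    congr 1
                    noncomm_ring
              _ = (Δ k / Δ (k-1)) • (f k * (e k * f k)) := by rw [hRk]
              _ = (Δ k / Δ (k-1)) • (f k * e k * f k) := by rw [← mul_assoc]
          have hscal : Δ (k-1) / Δ k * (Δ (k-1) / Δ k) * (Δ k / Δ (k-1)) = Δ (k-1) / Δ k := by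
            field_simp
          constructor
          · rw [hfr]
            simp only [sub_mul, mul_sub, smul_mul_assoc, mul_smul_comm, smul_sub, smul_smul]
            rw [hPk, hA1, hA2, hA3, smul_smul, hscal]
            abel
          · simp only [Nat.add_sub_cancel]
            rw [hfr, sub_mul, smul_mul_assoc, hPk, hA2]
  exact (key n hn).1 le_rfl
end

section
/- Let F be a field, δ ∈ F, and define Δ_k ∈ F by Δ_0 = 1, Δ_1 = δ, Δ_{k+1} = δ·Δ_k - Δ_{k-1}; assume Δ_k ≠ 0 for 1 ≤ k ≤ n-1. Let B be an associative unital F-algebra containing elements e_1, …, e_{n-1} satisfying the Temperley–Lieb relations: e_i^2 = δ·e_i, e_i e_j e_i = e_i for |i-j| = 1, and e_i e_j = e_j e_i for |i-j| > 1. Define the Jones–Wenzl elements f_k ∈ B by Wenzl's recursion f_1 = 1 and f_{k+1} = f_k - (Δ_{k-1}/Δ_k)·f_k·e_k·f_k (so f_m involves only e_1, …, e_{m-1}). Then for every m with 1 ≤ m ≤ n, the absorption property holds: f_n · f_m = f_n and f_m · f_n = f_n. -/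
/-- Absorption property of the Jones–Wenzl elements: for `1 ≤ m ≤ n`,
`f n * f m = f n` and `f m * f n = f n`. -/
theorem jones_wenzl_absorption {F : Type*} [Field F] {B : Type*} [Ring B] [Algebra F B]
    (n : ℕ) (δ : F) (Δ : ℕ → F)
    (hΔ0 : Δ 0 = 1) (hΔ1 : Δ 1 = δ)
    (hΔrec : ∀ k, Δ (k + 2) = δ * Δ (k + 1) - Δ k)
    (hΔne : ∀ k, 1 ≤ k → k ≤ n - 1 → Δ k ≠ 0)
    (e : ℕ → B)
    (he1 : ∀ i, 1 ≤ i → i ≤ n - 1 → e i ^ 2 = δ • e i)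
    (he2 : ∀ i j, 1 ≤ i → i ≤ n - 1 → 1 ≤ j → j ≤ n - 1 →
      |(i : ℤ) - (j : ℤ)| = 1 → e i * e j * e i = e i)
    (he3 : ∀ i j, 1 ≤ i → i ≤ n - 1 → 1 ≤ j → j ≤ n - 1 →
      1 < |(i : ℤ) - (j : ℤ)| → e i * e j = e j * e i)
    (f : ℕ → B) (hf1 : f 1 = 1)
    (hfrec : ∀ k, 1 ≤ k → k ≤ n - 1 →
      f (k + 1) = f k - (Δ (k - 1) / Δ k) • (f k * e k * f k)) :
    ∀ m, 1 ≤ m → m ≤ n → f n * f m = f n ∧ f m * f n = f n := by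
  -- Commutation: e j commutes with f m for j ≥ m + 1
  have Ccomm : ∀ m, 1 ≤ m → ∀ j, m + 1 ≤ j → j ≤ n - 1 → e j * f m = f m * e j := by
    intro m hm
    induction m, hm using Nat.le_induction with
    | base => intro j _ _; rw [hf1, mul_one, one_mul]
    | succ m hm ih =>
      intro j hj hjn
      have hrec := hfrec m hm (by omega)
      have h1 : e j * f m = f m * e j := ih j (by omega) hjn
      have h2 : e j * e m = e m * e j := by
        apply he3 j m (by omega) hjn hm (by omega)
        rw [abs_of_nonneg (by omega)]
        omega
      rw [hrec, mul_sub, sub_mul, mul_smul_comm, smul_mul_assoc, h1]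
      congr 2
      calc e j * (f m * e m * f m) = e j * f m * e m * f m := by
            rw [← mul_assoc, ← mul_assoc]
        _ = f m * e j * e m * f m := by rw [h1]
        _ = f m * e m * e j * f m := by rw [mul_assoc (f m), h2, ← mul_assoc]
        _ = f m * e m * (e j * f m) := by rw [mul_assoc]
        _ = f m * e m * f m * e j := by rw [h1, ← mul_assoc]
  -- Main induction
  have main : ∀ k, 1 ≤ k → k ≤ n → ∀ m, 1 ≤ m → m ≤ k →
      f k * f m = f k ∧ f m * f k = f k := by
    intro k hk
    induction k, hk using Nat.le_induction with
    | base =>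
      intro _ m hm hm1
      have : m = 1 := by omega
      subst this
      constructor <;> rw [hf1, one_mul]
    | succ k hk ih =>
      intro hkn m hm hmk
      have hk1 : k ≤ n - 1 := by omega
      have hrec := hfrec k hk hk1
      have Qk := ih (by omega)
      obtain ⟨hfk2, -⟩ := Qk k hk le_rfl
      rcases Nat.lt_or_ge m (k + 1) with hlt | hge
      · -- m ≤ k
        obtain ⟨ha, hb⟩ := Qk m hm (by omega)
        constructor
        · rw [hrec, sub_mul, smul_mul_assoc]
          congr 2
          rw [mul_assoc, ha]
        · rw [hrec, mul_sub, mul_smul_comm]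
          congr 2
          rw [← mul_assoc, ← mul_assoc, hb]
      · -- m = k + 1 : idempotence
        have : m = k + 1 := by omega
        subst this
        suffices h : f (k + 1) * f (k + 1) = f (k + 1) from ⟨h, h⟩
        set c : F := Δ (k - 1) / Δ k with hc
        set g : B := f k * e k * f k with hg
        have hfg : f k * g = g := by
          rw [hg, ← mul_assoc, ← mul_assoc, hfk2]
        have hgf : g * f k = g := by
          rw [hg, mul_assoc, hfk2]
        have hΔkne : Δ k ≠ 0 := hΔne k hk hk1
        have hΔk1ne : Δ (k - 1) ≠ 0 := by
          rcases Nat.eq_or_lt_of_le hk with h1 | h1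
          · rw [← h1]; simp [hΔ0]
          · exact hΔne (k - 1) (by omega) (by omega)
        -- key identity: g * g = (Δ k / Δ (k-1)) • g
        have hgg : g * g = (Δ k / Δ (k - 1)) • g := by
          rcases Nat.eq_or_lt_of_le hk with h1 | h1
          · -- k = 1
            subst h1
            have hee := he1 1 le_rfl hk1
            rw [sq] at hee
            simp only [hg, hf1, one_mul, mul_one]
            rw [hee]
            norm_num [hΔ0, hΔ1]
          · -- k = j + 2
            obtain ⟨j, rfl⟩ : ∃ j, k = j + 2 := ⟨k - 2, by omega⟩
            have hrec' := hfrec (j + 1) (by omega) (by omega)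
            simp only [Nat.add_sub_cancel] at hrec'
            have hcom : e (j + 2) * f (j + 1) = f (j + 1) * e (j + 2) :=
              Ccomm (j + 1) (by omega) (j + 2) (by omega) (by omega)
            have habs1 : f (j + 2) * f (j + 1) = f (j + 2) :=
              (Qk (j + 1) (by omega) (by omega)).1
            have habs2 : f (j + 1) * f (j + 2) = f (j + 2) :=
              (Qk (j + 1) (by omega) (by omega)).2
            have hee := he1 (j + 2) (by omega) (by omega)
            rw [sq] at hee
            have heke : e (j + 2) * e (j + 1) * e (j + 2) = e (j + 2) := by
              apply he2 (j + 2) (j + 1) (by omega) (by omega) (by omega) (by omega)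
              rw [abs_of_nonneg (by push_cast; omega)]
              push_cast; ring
            -- right-associated helper lemmas
            have hfk2' : ∀ x : B, f (j + 2) * (f (j + 2) * x) = f (j + 2) * x := fun x => by
              rw [← mul_assoc, hfk2]
            have hcom1 : ∀ x : B, e (j + 2) * (f (j + 1) * x) = f (j + 1) * (e (j + 2) * x) :=
              fun x => by rw [← mul_assoc, hcom, mul_assoc]
            have hcom2 : ∀ x : B, f (j + 1) * (e (j + 2) * x) = e (j + 2) * (f (j + 1) * x) :=
              fun x => by rw [← mul_assoc, ← hcom, mul_assoc]
            have habs1' : ∀ x : B, f (j + 2) * (f (j + 1) * x) = f (j + 2) * x := fun x => by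
              rw [← mul_assoc, habs1]
            have hee' : ∀ x : B, e (j + 2) * (e (j + 2) * x) = δ • (e (j + 2) * x) :=
              fun x => by rw [← mul_assoc, hee, smul_mul_assoc]
            have heke' : ∀ x : B, e (j + 2) * (e (j + 1) * (e (j + 2) * x)) = e (j + 2) * x :=
              fun x => by rw [← mul_assoc, ← mul_assoc, heke]
            rw [hg]
            simp only [mul_assoc]
            rw [hfk2']
            nth_rewrite 2 [hrec']
            simp only [sub_mul, mul_sub, smul_mul_assoc, mul_smul_comm, mul_assoc]
            rw [hcom1, habs1', hee', mul_smul_comm]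
            rw [hcom1, habs1', hcom2, habs2, heke']
            rw [← sub_smul]
            have hΔj1 : Δ (j + 1) ≠ 0 := hΔne (j + 1) (by omega) (by omega)
            rw [show j + 2 - 1 = j + 1 by omega]
            congr 1
            rw [hΔrec j]
            field_simp
        -- finish idempotence
        have hΔquot : c * c * (Δ k / Δ (k - 1)) = c := by
          rw [hc]; field_simp
        rw [hrec]
        have expand : (f k - c • g) * (f k - c • g)
            = f k * f k - c • (f k * g) - c • (g * f k) + (c * c) • (g * g) := by
          simp only [sub_mul, mul_sub, smul_mul_assoc, mul_smul_comm, smul_smul]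
          module
        rw [expand, hfk2, hfg, hgf, hgg, smul_smul, hΔquot]
        module
  intro m hm hmn
  exact main n (by omega) le_rfl m hm hmn
end

section
/- Let R be a commutative ring with an invertible element A such that A^2 - A^{-2} is invertible, and set Δ_k = (-1)^k (A^{2k+2} - A^{-2k-2})/(A^2 - A^{-2}); assume Δ_k is invertible in R for every k ≥ 1. Let z, x ∈ R and define S_k(z) ∈ R by S_0 = 1, S_1 = z, S_k(z) = z·S_{k-1}(z) - S_{k-2}(z). Suppose t : {1, 2, 3, …} → R satisfies t_1 = x and, for all n ≥ 2, the recursion t_n = x·S_{n-1}(z) - (Δ_{n-2}/Δ_{n-1})·t_{n-1} (this is the recursion satisfied by the trace tr_{Mb_1}(f_n) of the Jones–Wenzl idempotent f_n in the Kauffman bracket skein module of the twisted I-bundle over the Möbius band, obtained by closing one strand of f_n through the crosscap and the remaining n-1 strands around the crosscap). Then for all n ≥ 1, t_n = (x/Δ_{n-1}) · Σ_{k=0}^{n-1} (-1)^{n-1+k} · S_k(z) · Δ_k. -/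
/-- Closed formula for the trace `tr_{Mb_1}(f_n)` of the Jones–Wenzl idempotent in the
KBSM of the twisted I-bundle over the Möbius band, one strand through the crosscap:
`t n = (x / Δ_{n-1}) ∑_{k=0}^{n-1} (-1)^{n-1+k} S_k(z) Δ_k`. -/
theorem trace_Mb1_jones_wenzl {R : Type*} [CommRing R] (A : Rˣ)
    (hA : IsUnit ((A : R) ^ 2 - ((A⁻¹ : Rˣ) : R) ^ 2))
    (Δ ΔInv : ℕ → R)
    (hΔ : ∀ k, ((A : R) ^ 2 - ((A⁻¹ : Rˣ) : R) ^ 2) * Δ k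
      = (-1 : R) ^ k * ((A : R) ^ (2 * k + 2) - ((A⁻¹ : Rˣ) : R) ^ (2 * k + 2)))
    (hΔInv : ∀ k, Δ k * ΔInv k = 1)
    (z x : R) (S : ℕ → R)
    (hS0 : S 0 = 1) (hS1 : S 1 = z)
    (hSrec : ∀ k, S (k + 2) = z * S (k + 1) - S k)
    (t : ℕ → R) (ht1 : t 1 = x)
    (htrec : ∀ n, 2 ≤ n → t n = x * S (n - 1) - Δ (n - 2) * ΔInv (n - 1) * t (n - 1)) :
    ∀ n, 1 ≤ n →
      t n = x * ΔInv (n - 1)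
        * ∑ k ∈ Finset.range n, (-1 : R) ^ (n - 1 + k) * S k * Δ k := by
  intro n hn
  induction n, hn using Nat.le_induction with
  | base =>
    rw [ht1, Finset.sum_range_one, hS0]
    simp only [Nat.sub_self, Nat.add_zero, pow_zero]
    linear_combination (-x) * hΔInv 0
  | succ n hn ih =>
    have hrec := htrec (n + 1) (by omega)
    simp only [Nat.add_sub_cancel] at hrec
    have hn1 : n + 1 - 2 = n - 1 := by omega
    rw [hn1] at hrec
    rw [hrec, ih, Finset.sum_range_succ]
    simp only [Nat.add_sub_cancel]
    have hterm : ∀ k ∈ Finset.range n,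
        (-1 : R) ^ (n + k) * S k * Δ k = -((-1 : R) ^ (n - 1 + k) * S k * Δ k) := by
      intro k _
      have h : n + k = (n - 1 + k) + 1 := by omega
      rw [h, pow_succ]
      ring
    rw [Finset.sum_congr rfl hterm, Finset.sum_neg_distrib]
    have heven : (-1 : R) ^ (n + n) = 1 := Even.neg_one_pow ⟨n, rfl⟩
    rw [heven]
    linear_combination (-(x * ΔInv n * ∑ k ∈ Finset.range n,
        (-1 : R) ^ (n - 1 + k) * S k * Δ k)) * hΔInv (n - 1)
      + (-(x * S n)) * hΔInv n
end

section
/- Let R be a commutative ring with an invertible element A such that A^2 - A^{-2} is invertible, and set Δ_k = (-1)^k (A^{2k+2} - A^{-2k-2})/(A^2 - A^{-2}); assume Δ_k is invertible in R for every k ≥ 1. Let z ∈ R and define S_k(z) ∈ R by S_0 = 1, S_1 = z, S_k(z) = z·S_{k-1}(z) - S_{k-2}(z). Suppose t : {2, 3, 4, …} → R satisfies t_2 = S_1(z) - S_0(z) and, for all n ≥ 3, the recursion t_n = S_{n-1}(z) - S_{n-2}(z) + (Δ_{n-3}/Δ_{n-1})·t_{n-1} (this is the recursion satisfied by the trace tr_{Mb_2}(f_n)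 of the Jones–Wenzl idempotent f_n in the Kauffman bracket skein module of the twisted I-bundle over the Möbius band, obtained by closing two strands of f_n through the crosscap and the remaining n-2 strands around the crosscap). Then for all n ≥ 2, t_n = Σ_{i=0}^{n-2} (Δ_{i+1}·Δ_i / (Δ_{n-1}·Δ_{n-2})) · (S_{i+1}(z) - S_i(z)). -/
/-- Closed formula for the trace `tr_{Mb_2}(f_n)` of the Jones–Wenzl idempotent in the
KBSM of the twisted I-bundle over the Möbius band, two strands through the crosscap:
`t n = ∑_{i=0}^{n-2} (Δ_{i+1} Δ_i / (Δ_{n-1} Δ_{n-2})) (S_{i+1}(z) - S_i(z))`. -/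
theorem trace_Mb2_jones_wenzl {R : Type*} [CommRing R] (A : Rˣ)
    (hA : IsUnit ((A : R) ^ 2 - ((A⁻¹ : Rˣ) : R) ^ 2))
    (Δ ΔInv : ℕ → R)
    (hΔ : ∀ k, ((A : R) ^ 2 - ((A⁻¹ : Rˣ) : R) ^ 2) * Δ k
      = (-1 : R) ^ k * ((A : R) ^ (2 * k + 2) - ((A⁻¹ : Rˣ) : R) ^ (2 * k + 2)))
    (hΔInv : ∀ k, Δ k * ΔInv k = 1)
    (z : R) (S : ℕ → R)
    (hS0 : S 0 = 1) (hS1 : S 1 = z)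
    (hSrec : ∀ k, S (k + 2) = z * S (k + 1) - S k)
    (t : ℕ → R) (ht2 : t 2 = S 1 - S 0)
    (htrec : ∀ n, 3 ≤ n →
      t n = S (n - 1) - S (n - 2) + Δ (n - 3) * ΔInv (n - 1) * t (n - 1)) :
    ∀ n, 2 ≤ n →
      t n = ∑ i ∈ Finset.range (n - 1),
        Δ (i + 1) * Δ i * ΔInv (n - 1) * ΔInv (n - 2) * (S (i + 1) - S i) := by
  intro n hn
  induction n, hn using Nat.le_induction with
  | base =>
    norm_num [Finset.sum_range_one, ht2]
    linear_combination (-(S 1 - S 0)) * Δ 1 * ΔInv 1 * hΔInv 0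
      - (S 1 - S 0) * hΔInv 1
  | succ n hn ih =>
    obtain ⟨m, rfl⟩ : ∃ m, n = m + 2 := ⟨n - 2, by omega⟩
    have h3 : (3:ℕ) ≤ m + 2 + 1 := by omega
    rw [htrec (m + 2 + 1) h3]
    simp only [show m + 2 + 1 - 1 = m + 2 from rfl, show m + 2 + 1 - 2 = m + 1 from rfl,
      show m + 2 + 1 - 3 = m from rfl, show m + 2 - 1 = m + 1 from rfl,
      show m + 2 - 2 = m from rfl] at ih ⊢
    rw [ih]
    conv_rhs => rw [Finset.sum_range_succ]
    rw [Finset.mul_sum]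
    have hlast : Δ (m + 1 + 1) * Δ (m + 1) * ΔInv (m + 2) * ΔInv (m + 1)
        * (S (m + 1 + 1) - S (m + 1)) = S (m + 2) - S (m + 1) := by
      linear_combination (S (m + 2) - S (m + 1)) * Δ (m + 2) * ΔInv (m + 2) * hΔInv (m + 1)
        + (S (m + 2) - S (m + 1)) * hΔInv (m + 2)
    rw [hlast]
    have hsum : ∀ i ∈ Finset.range (m + 1),
        Δ m * ΔInv (m + 2) * (Δ (i + 1) * Δ i * ΔInv (m + 1) * ΔInv m * (S (i + 1) - S i))
        = Δ (i + 1) * Δ i * ΔInv (m + 2) * ΔInv (m + 1) * (S (i + 1) - S i) := by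
      intro i _
      linear_combination Δ (i + 1) * Δ i * ΔInv (m + 2) * ΔInv (m + 1)
        * (S (i + 1) - S i) * hΔInv m
    rw [Finset.sum_congr rfl hsum]
    ring
end
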